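/- arXiv:1804.00517 — 4 statements merged into one kernel-verified Lean document; each statement's English description precedes it below -/
import Mathlib

section
/- If positive integers (p, n) with p ≤ n satisfy 3p² − 6np + n(2n−1) = 0, then the pair (p', n') = (8n − 5p + 1, 19n − 12p + 3) also satisfies 3p'² − 6n'p' + n'(2n'−1) = 0. -/
def solutionForm {R : Type*} [CommRing R] (p n : R) : R :=
  3 * p ^ 2 - 6 * n * p + n * (2 * n - 1)

theorem solutionForm_step {R : Type*} [CommRing R] (p n : R) :
    solutionForm (8 * n - 5 * p + 1) (19 * n - 12 * p + 3) = solutionForm p n := by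
  unfold solutionForm
  ring

theorem stmt_1_general (p n : ℤ)
    (heq : 3 * p ^ 2 - 6 * n * p + n * (2 * n - 1) = 0) :
    3 * (8 * n - 5 * p + 1) ^ 2 - 6 * (19 * n - 12 * p + 3) * (8 * n - 5 * p + 1)
      + (19 * n - 12 * p + 3) * (2 * (19 * n - 12 * p + 3) - 1) = 0 :=
  (solutionForm_step p n).trans heq

/-- The recursion preserves solutions of 3p² − 6np + n(2n−1) = 0. -/
theorem stmt_1 (p n : ℤ) (hp : 0 < p) (hn : 0 < n) (hpn : p ≤ n)
    (heq : 3 * p ^ 2 - 6 * n * p + n * (2 * n - 1) = 0) :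
    3 * (8 * n - 5 * p + 1) ^ 2 - 6 * (19 * n - 12 * p + 3) * (8 * n - 5 * p + 1)
      + (19 * n - 12 * p + 3) * (2 * (19 * n - 12 * p + 3) - 1) = 0 :=
  stmt_1_general p n heq
end

section
/- The Diophantine equation 3p² − 6np + n(2n−1) = 0 has infinitely many solutions in positive integers (p, n) with p ≤ n. -/
/-! Substituting m = 2n + 1 and x = n - p turns the equation into the Pell equation
m² - 12x² = 1, and multiplying m + x√12 by the unit 7 + 2√12 gives the step
(p, n) ↦ (8n - 5p + 1, 19n - 12p + 3). It preserves the equation and the conditions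
0 < p ≤ n while strictly increasing n, so starting from (1, 3) there is no largest solution. -/

lemma Set.infinite_of_mapsTo_of_lt {ι α : Type*} [Preorder α] {s : Set ι} {f : ι → ι}
    (g : ι → α) (hs : s.Nonempty) (hf : Set.MapsTo f s s) (hg : ∀ x ∈ s, g x < g (f x)) :
    s.Infinite := by
  intro hfin
  obtain ⟨a, ha, hmax⟩ := hfin.exists_maximalFor g s hs
  exact (hg a ha).not_ge (hmax (hf ha) (hg a ha).le)

def solutionStep (q : ℤ × ℤ) : ℤ × ℤ :=
  (8 * q.2 - 5 * q.1 + 1, 19 * q.2 - 12 * q.1 + 3)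

lemma solutionStep_form (q : ℤ × ℤ) :
    3 * (solutionStep q).1 ^ 2 - 6 * (solutionStep q).2 * (solutionStep q).1 +
        (solutionStep q).2 * (2 * (solutionStep q).2 - 1) =
      3 * q.1 ^ 2 - 6 * q.2 * q.1 + q.2 * (2 * q.2 - 1) := by
  simp only [solutionStep]
  ring

/-- The equation 3p² − 6np + n(2n−1) = 0 has infinitely many positive
integer solutions with p ≤ n. -/
theorem stmt_3 :
    {q : ℤ × ℤ | 0 < q.1 ∧ 0 < q.2 ∧ q.1 ≤ q.2 ∧
      3 * q.1 ^ 2 - 6 * q.2 * q.1 + q.2 * (2 * q.2 - 1) = 0}.Infinite := by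
  refine Set.infinite_of_mapsTo_of_lt Prod.snd ⟨(1, 3), by norm_num⟩ (f := solutionStep) ?_ ?_
  · rintro q ⟨hp, hn, hpn, hq⟩
    refine ⟨?_, ?_, ?_, (solutionStep_form q).trans hq⟩ <;> simp only [solutionStep] <;> omega
  · rintro q ⟨-, hn, hpn, -⟩
    simp only [solutionStep]
    omega
end

section
/- For integers n ≥ 2 and p with 2 ≤ p ≤ 2n − 2, define λ₁ = (1/180)C(2n,p) − (1/12)C(2n−2,p−1) + (1/2)C(2n−4,p−2), λ₂ = −(1/180)C(2n,p) + (1/2)C(2n−2,p−1) − 2C(2n−4,p−2), λ₃ = (1/72)C(2n,p) − (1/6)C(2n−2,p−1) + (1/2)C(2n−4,p−2). Then ((4n+2)/((n+1)(n+2)))·λ₁ + (1/2)·λ₂ + λ₃ > 0. -/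
/-!
Multiplying by `360 (n+1)(n+2)`, the claim becomes
`(4n² + 20n + 12) a + 30 n (n-1) b > 180 n (n-1) c` for `a = C(2n,p)`, `b = C(2n-2,p-1)`,
`c = C(2n-4,p-2)`. Going from `C(m,i)` to `C(m+2,i+1)` multiplies a binomial coefficient by
`(m+1)(m+2) / ((i+1)(m-i+1)) ≥ 4(m+1)/(m+2)` (AM–GM on the denominator, equality at the middle
coefficient), so `b` and `a` are bounded below by explicit multiples of `c`, and what remains is
the polynomial inequality `n⁴ + 63n³ - 100n² - 36n + 36 > 0` for `n ≥ 2`.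
-/

namespace Nat

theorem choose_add_two_succ_mul (i j : ℕ) :
    (i + j + 2).choose (i + 1) * ((i + 1) * (j + 1)) =
      (i + j + 1) * (i + j + 2) * (i + j).choose i := by
  have h₁ := add_one_mul_choose_eq (i + j) i
  have h₂ := choose_mul_succ_eq (i + j + 1) (i + 1)
  rw [show i + j + 1 + 1 - (i + 1) = j + 1 by omega] at h₂
  calc (i + j + 2).choose (i + 1) * ((i + 1) * (j + 1))
      = (i + j + 2).choose (i + 1) * (j + 1) * (i + 1) := by ring
    _ = (i + j + 1).choose (i + 1) * (i + 1) * (i + j + 2) := by rw [← h₂]; ring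
    _ = (i + j + 1) * (i + j + 2) * (i + j).choose i := by rw [← h₁]; ring

theorem four_mul_choose_le (m i : ℕ) (h : i ≤ m) :
    4 * (m + 1) * m.choose i ≤ (m + 2) * (m + 2).choose (i + 1) := by
  obtain ⟨j, rfl⟩ := Nat.exists_eq_add_of_le h
  have hrec := choose_add_two_succ_mul i j
  have hamgm : 4 * ((i + 1) * (j + 1)) ≤ (i + j + 2) ^ 2 := by
    simpa [mul_assoc, add_add_add_comm] using four_mul_le_sq_add (i + 1) (j + 1)
  refine Nat.le_of_mul_le_mul_right ?_ (Nat.mul_pos i.succ_pos j.succ_pos)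
  calc 4 * (i + j + 1) * (i + j).choose i * ((i + 1) * (j + 1))
      = (i + j + 1) * (i + j).choose i * (4 * ((i + 1) * (j + 1))) := by ring
    _ ≤ (i + j + 1) * (i + j).choose i * (i + j + 2) ^ 2 := Nat.mul_le_mul_left _ hamgm
    _ = (i + j + 2) * (i + j + 2).choose (i + 1) * ((i + 1) * (j + 1)) := by
        rw [mul_assoc _ _ ((i + 1) * (j + 1)), hrec]; ring

end Nat

theorem patodi_combination_eq (N a b c : ℚ) (hN : 0 ≤ N) :
    ((4 * N + 2) / ((N + 1) * (N + 2))) * ((1 / 180) * a - (1 / 12) * b + (1 / 2) * c)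
      + (1 / 2) * (-(1 / 180) * a + (1 / 2) * b - 2 * c)
      + ((1 / 72) * a - (1 / 6) * b + (1 / 2) * c)
    = ((4 * N ^ 2 + 20 * N + 12) * a + 30 * N * (N - 1) * b - 180 * N * (N - 1) * c)
      / (360 * ((N + 1) * (N + 2))) := by
  field_simp
  ring

theorem patodi_numerator_pos (N a b c : ℚ) (hN : 2 ≤ N) (hc : 0 < c)
    (hbc : 4 * (2 * N - 3) * c ≤ (2 * N - 2) * b) (hab : 4 * (2 * N - 1) * b ≤ 2 * N * a) :
    0 < (4 * N ^ 2 + 20 * N + 12) * a + 30 * N * (N - 1) * b - 180 * N * (N - 1) * c := by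
  have hpoly : 0 < N ^ 4 + 63 * N ^ 3 - 100 * N ^ 2 - 36 * N + 36 := by nlinarith
  have hP : 0 ≤ (4 * N ^ 2 + 20 * N + 12) * (N - 1) := by nlinarith
  have hQ : 0 ≤ 2 * (4 * N ^ 2 + 20 * N + 12) * (2 * N - 1) + 30 * N ^ 2 * (N - 1) := by nlinarith
  have hNN : 0 < 2 * N * (N - 1) := by nlinarith
  refine pos_of_mul_pos_right (?_ : 0 < 2 * N * (N - 1) * _) hNN.le
  calc 0 < 8 * c * (N ^ 4 + 63 * N ^ 3 - 100 * N ^ 2 - 36 * N + 36)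
        + (4 * N ^ 2 + 20 * N + 12) * (N - 1) * (2 * N * a - 4 * (2 * N - 1) * b)
        + (2 * (4 * N ^ 2 + 20 * N + 12) * (2 * N - 1) + 30 * N ^ 2 * (N - 1))
          * ((2 * N - 2) * b - 4 * (2 * N - 3) * c) := by
        linarith [mul_pos hc hpoly, mul_nonneg hP (sub_nonneg.2 hab),
          mul_nonneg hQ (sub_nonneg.2 hbc)]
    _ = _ := by ring

theorem stmt_11_general (n p : ℕ) (hp : 2 ≤ p) (hp2 : p ≤ 2 * n - 2) :
    ((4 * n + 2 : ℚ) / ((n + 1) * (n + 2))) *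
        ((1 / 180 : ℚ) * ((2 * n).choose p) - (1 / 12) * ((2 * n - 2).choose (p - 1))
          + (1 / 2) * ((2 * n - 4).choose (p - 2)))
      + (1 / 2) *
        (-(1 / 180 : ℚ) * ((2 * n).choose p) + (1 / 2) * ((2 * n - 2).choose (p - 1))
          - 2 * ((2 * n - 4).choose (p - 2)))
      + ((1 / 72 : ℚ) * ((2 * n).choose p) - (1 / 6) * ((2 * n - 2).choose (p - 1))
          + (1 / 2) * ((2 * n - 4).choose (p - 2))) > 0 := by
  rw [gt_iff_lt, patodi_combination_eq _ _ _ _ n.cast_nonneg]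
  refine div_pos ?_ (by positivity)
  obtain ⟨i, rfl⟩ : ∃ i, p = i + 2 := ⟨p - 2, by omega⟩
  have hi : i ≤ 2 * n - 4 := by omega
  have hbc := Nat.four_mul_choose_le (2 * n - 4) i hi
  have hab := Nat.four_mul_choose_le (2 * n - 4 + 2) (i + 1) (by omega)
  rw [show 2 * n - 4 + 2 = 2 * n - 2 by omega] at hbc hab
  rw [show 2 * n - 2 + 2 = 2 * n by omega] at hab
  rw [show i + 2 - 1 = i + 1 by omega, Nat.add_sub_cancel]
  qify [(by omega : 4 ≤ 2 * n), (by omega : 2 ≤ 2 * n)] at hbc hab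
  have hc : (0 : ℚ) < (2 * n - 4).choose i := by exact_mod_cast Nat.choose_pos hi
  exact patodi_numerator_pos n _ _ _ (by exact_mod_cast (by omega : 2 ≤ n)) hc
    (by linarith) (by linarith)

/-- Positivity of the key combination of Patodi's coefficients
for 2 ≤ p ≤ 2n − 2. -/
theorem stmt_11 (n p : ℕ) (hn : 2 ≤ n) (hp : 2 ≤ p) (hp2 : p ≤ 2 * n - 2) :
    ((4 * n + 2 : ℚ) / ((n + 1) * (n + 2))) *
        ((1 / 180 : ℚ) * ((2 * n).choose p) - (1 / 12) * ((2 * n - 2).choose (p - 1))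
          + (1 / 2) * ((2 * n - 4).choose (p - 2)))
      + (1 / 2) *
        (-(1 / 180 : ℚ) * ((2 * n).choose p) + (1 / 2) * ((2 * n - 2).choose (p - 1))
          - 2 * ((2 * n - 4).choose (p - 2)))
      + ((1 / 72 : ℚ) * ((2 * n).choose p) - (1 / 6) * ((2 * n - 2).choose (p - 1))
          + (1 / 2) * ((2 * n - 4).choose (p - 2))) > 0 :=
  stmt_11_general n p hp hp2
end

section
/- For real p with 2 ≤ p ≤ 2n − 2 and integer n ≥ 2, the real-variable extension of the positivity statement holds: with λ₁, λ₂, λ₃ defined by the same formulas using generalized binomial-type polynomial expressions in p, the combination ((4n+2)/((n+1)(n+2)))·λ₁ + (1/2)·λ₂ + λ₃ is strictly positive. -/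
/-!
Put c = C(2n−4, p−2) > 0 and u = (p−1)(2n−1−p), so that p(2n−p) = u + 2n − 1 and
0 < u ≤ (n−1)². The functional equation Γ(s+1) = sΓ(s) makes C(2n−2, p−1) and C(2n, p)
rational multiples of c, and after clearing denominators the claim becomes positivity of a
polynomial in n and u. It is concave in u, so it is enough to check the endpoints u = 0 and
u = (n−1)²; the latter (p = n) is n⁴ + 63n³ − 100n² − 36n + 36 > 0.
-/

/-- The binomial coefficient C(m, p) for real p, interpreted via
Γ-function ratios: C(m, p) = m! / (Γ(p+1) Γ(m−p+1)). -/
noncomputable def realBinom (m : ℕ) (p : ℝ) : ℝ :=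
  (Nat.factorial m : ℝ) / (Real.Gamma (p + 1) * Real.Gamma ((m : ℝ) - p + 1))

lemma realBinom_pos {k : ℕ} {p : ℝ} (hp : -1 < p) (hpk : p < k + 1) : 0 < realBinom k p := by
  unfold realBinom
  have := Real.Gamma_pos_of_pos (show 0 < p + 1 by linarith)
  have := Real.Gamma_pos_of_pos (show 0 < (k : ℝ) - p + 1 by linarith)
  positivity

lemma realBinom_add_two_mul (k : ℕ) (p : ℝ) :
    p * (k + 2 - p) * realBinom (k + 2) p = (k + 2) * (k + 1) * realBinom k (p - 1) := by
  -- At p = 0 and p = k + 2 both sides vanish, since Mathlib's Γ is 0 at non-positive integers.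
  rcases eq_or_ne p 0 with rfl | hp
  · simp [realBinom]
  rcases eq_or_ne p (k + 2) with rfl | hpk
  · simp [realBinom, show (k : ℝ) - (k + 2 - 1) + 1 = 0 by ring]
  have hΓp : Real.Gamma (p + 1) = p * Real.Gamma (p - 1 + 1) := by
    rw [sub_add_cancel, Real.Gamma_add_one hp]
  have hpk' : (k : ℝ) + 2 - p ≠ 0 := sub_ne_zero.2 hpk.symm
  have hΓq : Real.Gamma (((k + 2 : ℕ) : ℝ) - p + 1)
      = (k + 2 - p) * Real.Gamma (k - (p - 1) + 1) := by
    rw [show (k : ℝ) - (p - 1) + 1 = k + 2 - p by ring, ← Real.Gamma_add_one hpk']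
    push_cast; ring_nf
  unfold realBinom
  rw [hΓp, hΓq, Nat.factorial_succ, Nat.factorial_succ]
  push_cast
  field_simp
  ring

/-- With a, b, c standing for C(2n, p), C(2n−2, p−1), C(2n−4, p−2), this is
(4n+2)/((n+1)(n+2))·λ₁ + λ₂/2 + λ₃. -/
noncomputable def patodiCombination (n a b c : ℝ) : ℝ :=
  ((4 * n + 2) / ((n + 1) * (n + 2))) * ((1 / 180) * a - (1 / 12) * b + (1 / 2) * c)
    + (1 / 2) * (-(1 / 180) * a + (1 / 2) * b - 2 * c)
    + ((1 / 72) * a - (1 / 6) * b + (1 / 2) * c)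

lemma patodiPoly_pos {n u : ℝ} (hn : 2 ≤ n) (hu : 0 ≤ u) (hun : u ≤ (n - 1) ^ 2) :
    0 < 4 * (2 * n - 1) * (2 * n - 3) * (n ^ 2 + 5 * n + 3)
      + 15 * (n - 1) * (2 * n - 3) * (u + 2 * n - 1) - 45 * u * (u + 2 * n - 1) := by
  have h0 : 0 < 4 * (2 * n - 1) * (2 * n - 3) * (n ^ 2 + 5 * n + 3)
      + 15 * (n - 1) * (2 * n - 3) * (2 * n - 1) := by
    have : 0 < 2 * n - 3 := by linarith
    have : 0 < n - 1 := by linarith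
    have : 0 < 2 * n - 1 := by linarith
    positivity
  have hU : 0 < n ^ 4 + 63 * n ^ 3 - 100 * n ^ 2 - 36 * n + 36 := by nlinarith
  -- With f the polynomial and U = (n−1)²: U·f(u) = (U − u)·f(0) + u·f(U) + 45·U·u·(U − u).
  nlinarith [mul_nonneg hu (sub_nonneg.2 hun), mul_nonneg (sub_nonneg.2 hun) h0.le,
    mul_nonneg hu hU.le]

lemma patodiCombination_eq {n : ℝ} (hn : 0 ≤ n) (a b c : ℝ) :
    patodiCombination n a b c
      = ((n ^ 2 + 5 * n + 3) / 90 * a + n * (n - 1) / 12 * (b - 6 * c)) / ((n + 1) * (n + 2)) := by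
  unfold patodiCombination
  field_simp
  ring

lemma patodiCombination_pos {n p a b c : ℝ} (hp : 2 ≤ p) (hpn : p ≤ 2 * n - 2) (hc : 0 < c)
    (ha : p * (2 * n - p) * a = 2 * n * (2 * n - 1) * b)
    (hb : (p - 1) * (2 * n - 1 - p) * b = (2 * n - 2) * (2 * n - 3) * c) :
    0 < patodiCombination n a b c := by
  have hn : 2 ≤ n := by linarith
  set u := (p - 1) * (2 * n - 1 - p)
  have hu : 0 < u := mul_pos (by linarith) (by linarith)
  have hun : u ≤ (n - 1) ^ 2 := by nlinarith [sq_nonneg (p - n)]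
  have hb_pos : 0 < b := by
    refine pos_of_mul_pos_right (a := u) ?_ hu.le
    rw [hb]
    exact mul_pos (mul_pos (by linarith) (by linarith)) hc
  have key : 180 * (2 * n - 3) * (u + 2 * n - 1)
        * ((n ^ 2 + 5 * n + 3) / 90 * a + n * (n - 1) / 12 * (b - 6 * c))
      = n * b * (4 * (2 * n - 1) * (2 * n - 3) * (n ^ 2 + 5 * n + 3)
          + 15 * (n - 1) * (2 * n - 3) * (u + 2 * n - 1) - 45 * u * (u + 2 * n - 1)) := by
    linear_combination 2 * (n ^ 2 + 5 * n + 3) * (2 * n - 3) * ha + 45 * n * (u + 2 * n - 1) * hb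
  rw [patodiCombination_eq (by linarith)]
  refine div_pos
    (pos_of_mul_pos_right (a := 180 * (2 * n - 3) * (u + 2 * n - 1)) ?_ ?_) (by positivity)
  · rw [key]
    exact mul_pos (mul_pos (by linarith) hb_pos) (patodiPoly_pos hn hu.le hun)
  · exact (mul_pos (mul_pos (by norm_num) (by linarith)) (by linarith)).le

theorem stmt_17_general (n : ℕ) (p : ℝ) (hp : 2 ≤ p) (hp2 : p ≤ 2 * n - 2) :
    ((4 * n + 2 : ℝ) / ((n + 1) * (n + 2))) *
        ((1 / 180) * realBinom (2 * n) p - (1 / 12) * realBinom (2 * n - 2) (p - 1)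
          + (1 / 2) * realBinom (2 * n - 4) (p - 2))
      + (1 / 2) *
        (-(1 / 180) * realBinom (2 * n) p + (1 / 2) * realBinom (2 * n - 2) (p - 1)
          - 2 * realBinom (2 * n - 4) (p - 2))
      + ((1 / 72) * realBinom (2 * n) p - (1 / 6) * realBinom (2 * n - 2) (p - 1)
          + (1 / 2) * realBinom (2 * n - 4) (p - 2)) > 0 := by
  have hn : 2 ≤ n := by exact_mod_cast (by linarith : (2 : ℝ) ≤ n)
  obtain ⟨m, rfl⟩ : ∃ m, n = m + 2 := ⟨n - 2, by omega⟩
  rw [show 2 * (m + 2) - 2 = 2 * m + 2 by omega, show 2 * (m + 2) - 4 = 2 * m by omega,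
    show 2 * (m + 2) = 2 * m + 2 + 2 by ring]
  refine patodiCombination_pos hp hp2
    (realBinom_pos (by linarith) (by push_cast at hp2 ⊢; linarith)) ?_ ?_
  · convert realBinom_add_two_mul (2 * m + 2) p using 1 <;> push_cast <;> ring
  · rw [show p - 2 = p - 1 - 1 by ring]
    convert realBinom_add_two_mul (2 * m) (p - 1) using 1 <;> push_cast <;> ring

/-- Positivity of the combination of Patodi's coefficients for real
p ∈ [2, 2n−2]. -/
theorem stmt_17 (n : ℕ) (hn : 2 ≤ n) (p : ℝ) (hp : 2 ≤ p) (hp2 : p ≤ 2 * n - 2) :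
    ((4 * n + 2 : ℝ) / ((n + 1) * (n + 2))) *
        ((1 / 180) * realBinom (2 * n) p - (1 / 12) * realBinom (2 * n - 2) (p - 1)
          + (1 / 2) * realBinom (2 * n - 4) (p - 2))
      + (1 / 2) *
        (-(1 / 180) * realBinom (2 * n) p + (1 / 2) * realBinom (2 * n - 2) (p - 1)
          - 2 * realBinom (2 * n - 4) (p - 2))
      + ((1 / 72) * realBinom (2 * n) p - (1 / 6) * realBinom (2 * n - 2) (p - 1)
          + (1 / 2) * realBinom (2 * n - 4) (p - 2)) > 0 :=
  stmt_17_general n p hp hp2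
end
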